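/- arXiv:1407.2290 — 4 statements merged into one kernel-verified Lean document; each statement's English description precedes it below -/
import Mathlib

section
/- For any N > 0, the function β : (0,∞) → ℝ defined by β(x) = (9/10) x^{−1/10} (1+x)^{1/10} (1+x/N)^{−1/4} + (1/10) x^{9/10} (1+x)^{−9/10} (1+x/N)^{−1/4} − (1/(4N)) x^{9/10} (1+x)^{1/10} (1+x/N)^{−5/4} has no point of inflection: there is no x > 0 with β″(x) = 0. -/
noncomputable def mono (N p q r : ℝ) : ℝ → ℝ := fun y => y ^ p * (1 + y) ^ q * (1 + y / N) ^ r

noncomputable def dmono (N p q r : ℝ) : ℝ → ℝ := fun y =>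
  p * mono N (p - 1) q r y + q * mono N p (q - 1) r y + r / N * mono N p q (r - 1) y

lemma mono_hasDerivAt {N x : ℝ} (hN : 0 < N) (hx : 0 < x) (p q r : ℝ) :
    HasDerivAt (mono N p q r) (dmono N p q r x) x := by
  have h1x : (0:ℝ) < 1 + x := by linarith
  have hxN : (0:ℝ) < 1 + x / N := by positivity
  have h1 : HasDerivAt (fun y : ℝ => y ^ p) (p * x ^ (p - 1)) x :=
    Real.hasDerivAt_rpow_const (Or.inl hx.ne')
  have h2 : HasDerivAt (fun y : ℝ => (1 + y) ^ q) (1 * q * (1 + x) ^ (q - 1)) x :=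
    ((hasDerivAt_id x).const_add 1).rpow_const (Or.inl h1x.ne')
  have h3 : HasDerivAt (fun y : ℝ => (1 + y / N) ^ r) (1 / N * r * (1 + x / N) ^ (r - 1)) x :=
    (((hasDerivAt_id x).div_const N).const_add 1).rpow_const (Or.inl hxN.ne')
  have h := (h1.mul h2).mul h3
  convert h using 1
  · rfl
  · rfl
  · rfl
  simp only [mono, dmono, Pi.mul_apply]
  ring

lemma dmono_hasDerivAt {N x : ℝ} (hN : 0 < N) (hx : 0 < x) (p q r : ℝ) :
    HasDerivAt (dmono N p q r)
      (p * dmono N (p - 1) q r x + q * dmono N p (q - 1) r x + r / N * dmono N p q (r - 1) x) x :=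
  (((mono_hasDerivAt hN hx _ _ _).const_mul p).add
    ((mono_hasDerivAt hN hx _ _ _).const_mul q)).add
    ((mono_hasDerivAt hN hx _ _ _).const_mul (r / N))

lemma rpow_shift {t : ℝ} (ht : 0 < t) (e s : ℝ) (n : ℕ) (h : e = s + n) :
    t ^ e = t ^ s * t ^ n := by
  subst h; rw [Real.rpow_add ht, Real.rpow_natCast]

set_option maxHeartbeats 4000000 in
/-- For any `N > 0`, the function
`β(x) = (9/10) x^{-1/10}(1+x)^{1/10}(1+x/N)^{-1/4}
      + (1/10) x^{9/10}(1+x)^{-9/10}(1+x/N)^{-1/4}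
      - (1/(4N)) x^{9/10}(1+x)^{1/10}(1+x/N)^{-5/4}`
has no point of inflection on `(0, ∞)`. -/
theorem no_inflection_point (N : ℝ) (hN : 0 < N) :
    ¬ ∃ x : ℝ, 0 < x ∧
      deriv (deriv (fun y : ℝ =>
        (9 / 10) * y ^ (-(1 : ℝ) / 10) * (1 + y) ^ ((1 : ℝ) / 10)
            * (1 + y / N) ^ (-(1 : ℝ) / 4)
          + (1 / 10) * y ^ ((9 : ℝ) / 10) * (1 + y) ^ (-(9 : ℝ) / 10)
            * (1 + y / N) ^ (-(1 : ℝ) / 4)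
          - (1 / (4 * N)) * y ^ ((9 : ℝ) / 10) * (1 + y) ^ ((1 : ℝ) / 10)
            * (1 + y / N) ^ (-(5 : ℝ) / 4))) x = 0 := by
  rintro ⟨x, hx, hz⟩
  have hf_eq : (fun y : ℝ =>
        (9 / 10) * y ^ (-(1 : ℝ) / 10) * (1 + y) ^ ((1 : ℝ) / 10)
            * (1 + y / N) ^ (-(1 : ℝ) / 4)
          + (1 / 10) * y ^ ((9 : ℝ) / 10) * (1 + y) ^ (-(9 : ℝ) / 10)
            * (1 + y / N) ^ (-(1 : ℝ) / 4)
          - (1 / (4 * N)) * y ^ ((9 : ℝ) / 10) * (1 + y) ^ ((1 : ℝ) / 10)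
            * (1 + y / N) ^ (-(5 : ℝ) / 4))
      = fun y : ℝ => 9 / 10 * mono N (-(1 : ℝ) / 10) ((1 : ℝ) / 10) (-(1 : ℝ) / 4) y
          + 1 / 10 * mono N ((9 : ℝ) / 10) (-(9 : ℝ) / 10) (-(1 : ℝ) / 4) y
          - 1 / (4 * N) * mono N ((9 : ℝ) / 10) ((1 : ℝ) / 10) (-(5 : ℝ) / 4) y := by
    funext y; simp only [mono]; ring
  rw [hf_eq] at hz
  set G : ℝ → ℝ := fun y => 9 / 10 * dmono N (-(1 : ℝ) / 10) ((1 : ℝ) / 10) (-(1 : ℝ) / 4) y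
      + 1 / 10 * dmono N ((9 : ℝ) / 10) (-(9 : ℝ) / 10) (-(1 : ℝ) / 4) y
      - 1 / (4 * N) * dmono N ((9 : ℝ) / 10) ((1 : ℝ) / 10) (-(5 : ℝ) / 4) y with hG_def
  have hg : ∀ y : ℝ, 0 < y → HasDerivAt (fun y : ℝ =>
        9 / 10 * mono N (-(1 : ℝ) / 10) ((1 : ℝ) / 10) (-(1 : ℝ) / 4) y
          + 1 / 10 * mono N ((9 : ℝ) / 10) (-(9 : ℝ) / 10) (-(1 : ℝ) / 4) y
          - 1 / (4 * N) * mono N ((9 : ℝ) / 10) ((1 : ℝ) / 10) (-(5 : ℝ) / 4) y) (G y) y :=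
    fun y hy =>
      (((mono_hasDerivAt hN hy _ _ _).const_mul _).add
        ((mono_hasDerivAt hN hy _ _ _).const_mul _)).sub
        ((mono_hasDerivAt hN hy _ _ _).const_mul _)
  have hev : deriv (fun y : ℝ =>
        9 / 10 * mono N (-(1 : ℝ) / 10) ((1 : ℝ) / 10) (-(1 : ℝ) / 4) y
          + 1 / 10 * mono N ((9 : ℝ) / 10) (-(9 : ℝ) / 10) (-(1 : ℝ) / 4) y
          - 1 / (4 * N) * mono N ((9 : ℝ) / 10) ((1 : ℝ) / 10) (-(5 : ℝ) / 4) y) =ᶠ[nhds x] G := by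
    filter_upwards [isOpen_Ioi.mem_nhds (Set.mem_Ioi.mpr hx)] with y hy using (hg y hy).deriv
  rw [hev.deriv_eq] at hz
  have hGd : HasDerivAt G
      (9 / 10 * (-(1 : ℝ) / 10 * dmono N (-(1 : ℝ) / 10 - 1) ((1 : ℝ) / 10) (-(1 : ℝ) / 4) x
          + (1 : ℝ) / 10 * dmono N (-(1 : ℝ) / 10) ((1 : ℝ) / 10 - 1) (-(1 : ℝ) / 4) x
          + (-(1 : ℝ) / 4) / N * dmono N (-(1 : ℝ) / 10) ((1 : ℝ) / 10) (-(1 : ℝ) / 4 - 1) x)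
        + 1 / 10 * ((9 : ℝ) / 10 * dmono N ((9 : ℝ) / 10 - 1) (-(9 : ℝ) / 10) (-(1 : ℝ) / 4) x
          + (-(9 : ℝ) / 10) * dmono N ((9 : ℝ) / 10) (-(9 : ℝ) / 10 - 1) (-(1 : ℝ) / 4) x
          + (-(1 : ℝ) / 4) / N * dmono N ((9 : ℝ) / 10) (-(9 : ℝ) / 10) (-(1 : ℝ) / 4 - 1) x)
        - 1 / (4 * N) * ((9 : ℝ) / 10 * dmono N ((9 : ℝ) / 10 - 1) ((1 : ℝ) / 10) (-(5 : ℝ) / 4) x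
          + (1 : ℝ) / 10 * dmono N ((9 : ℝ) / 10) ((1 : ℝ) / 10 - 1) (-(5 : ℝ) / 4) x
          + (-(5 : ℝ) / 4) / N * dmono N ((9 : ℝ) / 10) ((1 : ℝ) / 10) (-(5 : ℝ) / 4 - 1) x)) x :=
    (((dmono_hasDerivAt hN hx _ _ _).const_mul _).add
      ((dmono_hasDerivAt hN hx _ _ _).const_mul _)).sub
      ((dmono_hasDerivAt hN hx _ _ _).const_mul _)
  rw [hGd.deriv] at hz
  simp only [dmono, mono] at hz
  norm_num at hz
  have h1x : (0:ℝ) < 1 + x := by linarith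
  have hxN : (0:ℝ) < 1 + x / N := by positivity
  rw [rpow_shift hx (9/10 : ℝ) (-(21/10) : ℝ) 3 (by norm_num),
      rpow_shift hx (-(1/10) : ℝ) (-(21/10) : ℝ) 2 (by norm_num),
      rpow_shift hx (-(11/10) : ℝ) (-(21/10) : ℝ) 1 (by norm_num),
      rpow_shift h1x ((1/10) : ℝ) (-(29/10) : ℝ) 3 (by norm_num),
      rpow_shift h1x (-(9/10) : ℝ) (-(29/10) : ℝ) 2 (by norm_num),
      rpow_shift h1x (-(19/10) : ℝ) (-(29/10) : ℝ) 1 (by norm_num),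
      rpow_shift hxN (-(1/4) : ℝ) (-(13/4) : ℝ) 3 (by norm_num),
      rpow_shift hxN (-(5/4) : ℝ) (-(13/4) : ℝ) 2 (by norm_num),
      rpow_shift hxN (-(9/4) : ℝ) (-(13/4) : ℝ) 1 (by norm_num)] at hz
  refine absurd hz (ne_of_gt ?_)
  refine lt_of_lt_of_eq (b := x ^ (-(21/10) : ℝ) * (1 + x) ^ (-(29/10) : ℝ)
      * (1 + x / N) ^ (-(13/4) : ℝ) *
      (99/1000 + 27/100*x + (729/2000*x + 351/400*x^2)/N
        + (5103/4000*x^2 + 357/100*x^3 + 87/32*x^4 + 15/16*x^5)/N^2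
        + (2457/8000*x^3 + 273/320*x^4 + 39/64*x^5 + 15/64*x^6)/N^3))
    (by positivity) ?_
  field_simp
  ring
end

section
/- Let 0 < E_H < E_F and T > 0. Let F : ℝ × (0,T) → ℝ be smooth, even in x (F(−x,t) = F(x,t)), and satisfy the heat equation ∂F/∂t = ∂²F/∂x². Let x* : (0,T) → (0,∞) be C¹ with F(x*(t),t) = E_H for all t, and assume 0 ≤ F(x,t) ≤ E_H whenever |x| ≥ x*(t). Assume the mass-matching (Stefan) condition (E_F − E_H) · dx*/dt(t) = ∂F/∂x(x*(t),t) for all t ∈ (0,T). Define E(x,t) = E_F if |x| < x*(t) and E(x,t) = F(x,t) if |x| ≥ x*(t), and Φ(s) = min(s, E_H). Then E is a weak solution of ∂E/∂t = ∂²[Φ(E)]/∂x²: for every test function φ ∈ C_c^∞(ℝ × (0,T)), ∫₀^T ∫_ℝ [ E(x,t) ∂φ/∂t(x,t) + Φ(E(x,t)) ∂²φ/∂x²(x,t) ] dx dt = 0. -/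
open MeasureTheory Set intervalIntegral

/-- slice derivative in t -/
lemma slice_t_hasDerivAt {g : ℝ × ℝ → ℝ} {x t : ℝ} (hg : DifferentiableAt ℝ g (x, t)) :
    HasDerivAt (fun τ => g (x, τ)) (fderiv ℝ g (x, t) (0, 1)) t := by
  have h1 : HasDerivAt (fun τ : ℝ => ((x, τ) : ℝ × ℝ)) ((0 : ℝ), (1 : ℝ)) t :=
    (hasDerivAt_const t x).prodMk (hasDerivAt_id t)
  exact (hg.hasFDerivAt.comp_hasDerivAt t h1)

/-- slice derivative in x -/
lemma slice_x_hasDerivAt {g : ℝ × ℝ → ℝ} {x t : ℝ} (hg : DifferentiableAt ℝ g (x, t)) :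
    HasDerivAt (fun y => g (y, t)) (fderiv ℝ g (x, t) (1, 0)) x := by
  have h1 : HasDerivAt (fun y : ℝ => ((y, t) : ℝ × ℝ)) ((1 : ℝ), (0 : ℝ)) x :=
    (hasDerivAt_id x).prodMk (hasDerivAt_const x t)
  exact (hg.hasFDerivAt.comp_hasDerivAt x h1)

/-- applied fderiv is smooth -/
lemma contDiffAt_fderiv_apply {g : ℝ × ℝ → ℝ} {p : ℝ × ℝ} (v : ℝ × ℝ)
    (hg : ContDiffAt ℝ (⊤ : ℕ∞) g p) :
    ContDiffAt ℝ (⊤ : ℕ∞) (fun q => fderiv ℝ g q v) p := by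
  have h := hg.fderiv_right (m := (⊤ : ℕ∞)) (by simp)
  exact ((ContinuousLinearMap.apply ℝ ℝ v).contDiff (n := (⊤ : ℕ∞))).comp_contDiffAt p h

lemma mem_uIcc_abs {x c y : ℝ} (hx : x ∈ uIcc c y) : |x - c| ≤ |y - c| := by
  rcases hx with ⟨h1, h2⟩
  rw [abs_sub_le_iff]
  constructor
  · calc x - c ≤ max c y - c := by nlinarith [le_max_left c y]
    _ ≤ |y - c| := by rcases le_total c y with h | h
                      · rw [max_eq_right h]; exact le_abs_self _
                      · rw [max_eq_left h]; simp [abs_nonneg]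
  · calc c - x ≤ c - min c y := by nlinarith [min_le_left c y]
    _ ≤ |y - c| := by rcases le_total c y with h | h
                      · rw [min_eq_left h]; simp [abs_nonneg]
                      · rw [min_eq_right h]; rw [abs_sub_comm]; exact le_abs_self _

/-- Leibniz: moving endpoint starting at the base point. -/
lemma hasDerivAt_moving_endpoint (f : ℝ × ℝ → ℝ) {U : Set (ℝ × ℝ)} (hU : IsOpen U)
    (hf : ContinuousOn f U) {c t₀ : ℝ} (hmem : (c, t₀) ∈ U)
    {h : ℝ → ℝ} {h' : ℝ} (hh : HasDerivAt h h' t₀) (hc : h t₀ = c) :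
    HasDerivAt (fun t => ∫ x in c..h t, f (x, t)) (h' * f (c, t₀)) t₀ := by
  subst hc
  set c := h t₀ with hcdef
  obtain ⟨δ₀, hδ₀, hbU⟩ := Metric.isOpen_iff.mp hU _ hmem
  have hfc : ContinuousAt f (c, t₀) := hf.continuousAt (hU.mem_nhds hmem)
  set Φ : ℝ × ℝ → ℝ := fun p => ∫ x in c..p.1, f (x, p.2) with hΦ
  have hIab : ∀ p : ℝ × ℝ, p ∈ Metric.ball (c, t₀) δ₀ →
      IntervalIntegrable (fun x => f (x, p.2)) volume c p.1 := by
    intro p hp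
    have hsub : ∀ x ∈ uIcc c p.1, (x, p.2) ∈ U := by
      intro x hx
      apply hbU
      rw [Metric.mem_ball, Prod.dist_eq] at hp ⊢
      refine max_lt (lt_of_le_of_lt ?_ (lt_of_le_of_lt (le_max_left _ _) hp))
        (lt_of_le_of_lt (le_max_right _ _) hp)
      simpa [Real.dist_eq] using mem_uIcc_abs hx
    have : ContinuousOn (fun x => f (x, p.2)) (uIcc c p.1) := by
      apply hf.comp (Continuous.continuousOn (by continuity)) hsub
    exact this.intervalIntegrable
  have stepA : HasFDerivAt Φ (f (c, t₀) • (ContinuousLinearMap.fst ℝ ℝ ℝ)) (c, t₀) := by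
    rw [hasFDerivAt_iff_isLittleO, Asymptotics.isLittleO_iff]
    intro ε hε
    rcases Metric.continuousAt_iff.mp hfc ε hε with ⟨δ₁, hδ₁, hδ⟩
    have hδmin : (0 : ℝ) < min δ₀ δ₁ := lt_min hδ₀ hδ₁
    filter_upwards [Metric.ball_mem_nhds (c, t₀) hδmin] with p hp
    have hpball : p ∈ Metric.ball (c, t₀) δ₀ :=
      Metric.ball_subset_ball (min_le_left _ _) hp
    have hInt := hIab p hpball
    have hΦ0 : Φ (c, t₀) = 0 := by simp [hΦ]
    have hL : (f (c, t₀) • (ContinuousLinearMap.fst ℝ ℝ ℝ)) (p - (c, t₀))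
        = f (c, t₀) * (p.1 - c) := by
      simp [ContinuousLinearMap.smul_apply]
    have key : Φ p - Φ (c, t₀) - (f (c, t₀) • (ContinuousLinearMap.fst ℝ ℝ ℝ)) (p - (c, t₀))
        = ∫ x in c..p.1, (f (x, p.2) - f (c, t₀)) := by
      rw [hΦ0, hL, intervalIntegral.integral_sub hInt intervalIntegrable_const,
        intervalIntegral.integral_const, smul_eq_mul]
      ring
    rw [key]
    have hbound : ∀ x ∈ Set.uIoc c p.1, ‖f (x, p.2) - f (c, t₀)‖ ≤ ε := by
      intro x hx
      have hx' : x ∈ uIcc c p.1 := Set.uIoc_subset_uIcc hx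
      have : dist (x, p.2) (c, t₀) < δ₁ := by
        rw [Metric.mem_ball, Prod.dist_eq] at hp
        rw [Prod.dist_eq]
        refine max_lt (lt_of_le_of_lt ?_ (lt_of_le_of_lt (le_max_left _ _)
          (lt_of_lt_of_le hp (min_le_right _ _))))
          (lt_of_le_of_lt (le_max_right _ _) (lt_of_lt_of_le hp (min_le_right _ _)))
        simpa [Real.dist_eq] using mem_uIcc_abs hx'
      have := hδ this
      rw [Real.dist_eq] at this
      exact le_of_lt this
    calc ‖∫ x in c..p.1, (f (x, p.2) - f (c, t₀))‖ ≤ ε * |p.1 - c| :=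
          intervalIntegral.norm_integral_le_of_norm_le_const hbound
      _ ≤ ε * ‖p - (c, t₀)‖ := by
          apply mul_le_mul_of_nonneg_left _ (le_of_lt hε)
          calc |p.1 - c| = ‖(p - (c, t₀)).1‖ := by simp [Real.norm_eq_abs]
            _ ≤ ‖p - (c, t₀)‖ := norm_fst_le _
  have hfun : HasDerivAt (fun t => ((h t, t) : ℝ × ℝ)) ((h', 1) : ℝ × ℝ) t₀ :=
    hh.prodMk (hasDerivAt_id t₀)
  have := stepA.comp_hasDerivAt (f := fun t => (h t, t)) t₀ hfun
  have hval : (f (c, t₀) • (ContinuousLinearMap.fst ℝ ℝ ℝ)) ((h', 1) : ℝ × ℝ)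
      = h' * f (c, t₀) := by simp [mul_comm]
  rw [hval] at this
  exact this

/-- Parametric differentiation with fixed endpoints. -/
lemma hasDerivAt_param_integral (g gT : ℝ × ℝ → ℝ) {U : Set (ℝ × ℝ)} (hU : IsOpen U)
    (hg : ContinuousOn g U) (hgT : ContinuousOn gT U)
    (hd : ∀ p ∈ U, HasDerivAt (fun τ => g (p.1, τ)) (gT p) p.2)
    (a b t₀ : ℝ) (hsub : uIcc a b ×ˢ ({t₀} : Set ℝ) ⊆ U) :
    HasDerivAt (fun t => ∫ x in a..b, g (x, t)) (∫ x in a..b, gT (x, t₀)) t₀ := by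
  have hK : IsCompact (uIcc a b ×ˢ ({t₀} : Set ℝ)) :=
    isCompact_uIcc.prod isCompact_singleton
  obtain ⟨ε, hε, hthick⟩ := hK.exists_thickening_subset_open hU hsub
  set V : Set (ℝ × ℝ) := uIcc a b ×ˢ Icc (t₀ - ε/2) (t₀ + ε/2) with hV
  have hVU : V ⊆ U := by
    intro p hp
    apply hthick
    rw [Metric.mem_thickening_iff]
    refine ⟨(p.1, t₀), ⟨hp.1, rfl⟩, ?_⟩
    rw [Prod.dist_eq]
    have h2 : dist p.2 t₀ ≤ ε/2 := by
      rw [Real.dist_eq, abs_sub_le_iff]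
      rcases hp.2 with ⟨hl, hr⟩
      constructor <;> linarith
    simp only [dist_self]
    calc max 0 (dist p.2 t₀) ≤ ε/2 := max_le (by linarith) h2
      _ < ε := by linarith
  have hVcomp : IsCompact V := isCompact_uIcc.prod isCompact_Icc
  obtain ⟨C, hC⟩ := hVcomp.exists_bound_of_continuousOn (hgT.mono hVU)
  have hεpos : (0:ℝ) < ε/2 := by linarith
  have hsliceCont : ∀ t ∈ Icc (t₀ - ε/2) (t₀ + ε/2),
      ContinuousOn (fun x => g (x, t)) (uIcc a b) := by
    intro t ht
    apply (hg.mono hVU).comp (Continuous.continuousOn (by continuity))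
    intro x hx
    exact ⟨hx, ht⟩
  have hmain := intervalIntegral.hasDerivAt_integral_of_dominated_loc_of_deriv_le
    (F := fun t x => g (x, t)) (F' := fun t x => gT (x, t)) (a := a) (b := b)
    (x₀ := t₀) (bound := fun _ => C) (μ := volume) (Metric.ball_mem_nhds t₀ hεpos)
    ?_ ?_ ?_ ?_ ?_ ?_
  · exact hmain.2
  · filter_upwards [Icc_mem_nhds (by linarith : t₀ - ε/2 < t₀) (by linarith : t₀ < t₀ + ε/2)] with t ht
    exact ((hsliceCont t ht).aestronglyMeasurable measurableSet_uIcc).mono_measure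
      (Measure.restrict_mono Set.uIoc_subset_uIcc le_rfl)
  · exact (hsliceCont t₀ (by constructor <;> linarith)).intervalIntegrable
  · have : ContinuousOn (fun x => gT (x, t₀)) (uIcc a b) := by
      apply (hgT.mono hVU).comp (Continuous.continuousOn (by continuity))
      intro x hx
      exact ⟨hx, by constructor <;> linarith⟩
    exact (this.aestronglyMeasurable measurableSet_uIcc).mono_measure
      (Measure.restrict_mono Set.uIoc_subset_uIcc le_rfl)
  · apply Filter.Eventually.of_forall
    intro x hx t ht
    apply hC
    refine ⟨Set.uIoc_subset_uIcc hx, ?_⟩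
    rw [Metric.mem_ball, Real.dist_eq, abs_sub_lt_iff] at ht
    constructor <;> linarith [ht.1, ht.2]
  · exact intervalIntegrable_const
  · apply Filter.Eventually.of_forall
    intro x hx t ht
    have hmem : ((x, t) : ℝ × ℝ) ∈ U := by
      apply hVU
      refine ⟨Set.uIoc_subset_uIcc hx, ?_⟩
      rw [Metric.mem_ball, Real.dist_eq, abs_sub_lt_iff] at ht
      constructor <;> linarith [ht.1, ht.2]
    exact hd (x, t) hmem

lemma ae_ne_real (c : ℝ) : ∀ᵐ x : ℝ, x ≠ c := by
  simpa [MeasureTheory.ae_iff] using MeasureTheory.measure_singleton c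

lemma fderiv_apply_zero_on_open {g : ℝ × ℝ → ℝ} {W : Set (ℝ × ℝ)} (hW : IsOpen W)
    (hg : ∀ p ∈ W, g p = 0) (v : ℝ × ℝ) : ∀ p ∈ W, fderiv ℝ g p v = 0 := by
  intro p hp
  have h : g =ᶠ[nhds p] (fun _ => (0 : ℝ)) :=
    Filter.eventuallyEq_of_mem (hW.mem_nhds hp) hg
  rw [h.fderiv_eq]
  simp


lemma abs_bound_of_compact_support {f : ℝ × ℝ → ℝ} (hf : Continuous f)
    (hc : HasCompactSupport f) : ∃ C, ∀ p, |f p| ≤ C := by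
  obtain ⟨C, hC⟩ := hf.bounded_above_of_compact_support hc
  exact ⟨C, fun p => by simpa [Real.norm_eq_abs] using hC p⟩

set_option maxHeartbeats 4000000 in
/-- The glued interface profile (plateau at `E_F` inside the free boundary `x*`, heat-equation
tail `F` outside) is a weak solution of the filtration equation `∂E/∂t = ∂²[Φ(E)]/∂x²` with
`Φ(s) = min(s, E_H)`, given the mass-matching (Stefan) condition at the interface. -/
theorem interface_weak_solution (E_H E_F T : ℝ)
    (hEH : 0 < E_H) (hEHF : E_H < E_F) (hT : 0 < T)
    (F : ℝ → ℝ → ℝ)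
    (hFsmooth : ContDiffOn ℝ (⊤ : ℕ∞) (fun p : ℝ × ℝ => F p.1 p.2) (univ ×ˢ Ioo (0 : ℝ) T))
    (hFeven : ∀ x t, F (-x) t = F x t)
    (hheat : ∀ x : ℝ, ∀ t ∈ Ioo (0 : ℝ) T,
      deriv (fun τ => F x τ) t = deriv (deriv (fun y => F y t)) x)
    (xs : ℝ → ℝ)
    (hxs : ContDiffOn ℝ 1 xs (Ioo (0 : ℝ) T))
    (hxspos : ∀ t ∈ Ioo (0 : ℝ) T, 0 < xs t)
    (hinterface : ∀ t ∈ Ioo (0 : ℝ) T, F (xs t) t = E_H)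
    (hFrange : ∀ t ∈ Ioo (0 : ℝ) T, ∀ x : ℝ, xs t ≤ |x| → 0 ≤ F x t ∧ F x t ≤ E_H)
    (hstefan : ∀ t ∈ Ioo (0 : ℝ) T,
      (E_F - E_H) * deriv xs t = deriv (fun y => F y t) (xs t))
    (E : ℝ → ℝ → ℝ)
    (hE : ∀ x t, E x t = if |x| < xs t then E_F else F x t) :
    ∀ φ : ℝ → ℝ → ℝ,
      ContDiff ℝ (⊤ : ℕ∞) (fun p : ℝ × ℝ => φ p.1 p.2) →
      HasCompactSupport (fun p : ℝ × ℝ => φ p.1 p.2) →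
      tsupport (fun p : ℝ × ℝ => φ p.1 p.2) ⊆ univ ×ˢ Ioo (0 : ℝ) T →
      ∫ t in Ioo (0 : ℝ) T, ∫ x : ℝ,
          (E x t * deriv (fun τ => φ x τ) t
            + min (E x t) E_H * deriv (deriv (fun y => φ y t)) x) = 0 := by
  intro φ hφs hφc hφsupp
  set Ω : Set (ℝ × ℝ) := univ ×ˢ Ioo (0 : ℝ) T with hΩdef
  have hΩopen : IsOpen Ω := isOpen_univ.prod isOpen_Ioo
  set φ' : ℝ × ℝ → ℝ := fun p => φ p.1 p.2 with hφ'def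
  set Fu : ℝ × ℝ → ℝ := fun p => F p.1 p.2 with hFudef
  set pT : ℝ × ℝ → ℝ := fun p => fderiv ℝ φ' p (0, 1) with hpTdef
  set pX : ℝ × ℝ → ℝ := fun p => fderiv ℝ φ' p (1, 0) with hpXdef
  set pXX : ℝ × ℝ → ℝ := fun p => fderiv ℝ pX p (1, 0) with hpXXdef
  set FT : ℝ × ℝ → ℝ := fun p => fderiv ℝ Fu p (0, 1) with hFTdef
  set FX : ℝ × ℝ → ℝ := fun p => fderiv ℝ Fu p (1, 0) with hFXdef
  set FXX : ℝ × ℝ → ℝ := fun p => fderiv ℝ FX p (1, 0) with hFXXdef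
  -- basic smoothness facts for φ
  have hφdiff : ∀ p : ℝ × ℝ, DifferentiableAt ℝ φ' p := fun p =>
    (hφs.contDiffAt.differentiableAt (by simp))
  have hpXsm : ContDiff ℝ (⊤ : ℕ∞) pX := contDiff_iff_contDiffAt.2 fun p =>
    contDiffAt_fderiv_apply (1, 0) hφs.contDiffAt
  have hpXdiff : ∀ p : ℝ × ℝ, DifferentiableAt ℝ pX p := fun p =>
    (hpXsm.contDiffAt.differentiableAt (by simp))
  have hφT : ∀ x t : ℝ, HasDerivAt (fun τ => φ x τ) (pT (x, t)) t := fun x t =>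
    slice_t_hasDerivAt (hφdiff (x, t))
  have hφX : ∀ x t : ℝ, HasDerivAt (fun y => φ y t) (pX (x, t)) x := fun x t =>
    slice_x_hasDerivAt (hφdiff (x, t))
  have hφXX : ∀ x t : ℝ, HasDerivAt (fun y => pX (y, t)) (pXX (x, t)) x := fun x t =>
    slice_x_hasDerivAt (hpXdiff (x, t))
  have derivφT : ∀ x t : ℝ, deriv (fun τ => φ x τ) t = pT (x, t) := fun x t => (hφT x t).deriv
  have derivφXfun : ∀ t : ℝ, deriv (fun y => φ y t) = fun y => pX (y, t) := fun t =>
    funext fun x => (hφX x t).deriv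
  have derivφXX : ∀ x t : ℝ, deriv (deriv (fun y => φ y t)) x = pXX (x, t) := by
    intro x t
    rw [derivφXfun t]
    exact (hφXX x t).deriv
  -- continuity and compact support of the partials of φ
  have hpTcont : Continuous pT := by
    have : ContDiff ℝ (⊤ : ℕ∞) pT := contDiff_iff_contDiffAt.2 fun p =>
      contDiffAt_fderiv_apply (0, 1) hφs.contDiffAt
    exact this.continuous
  have hpXcont : Continuous pX := hpXsm.continuous
  have hpXXcont : Continuous pXX := by
    have : ContDiff ℝ (⊤ : ℕ∞) pXX := contDiff_iff_contDiffAt.2 fun p =>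
      contDiffAt_fderiv_apply (1, 0) hpXsm.contDiffAt
    exact this.continuous
  have hpTcs : HasCompactSupport pT :=
    HasCompactSupport.comp_left (g := fun L : (ℝ × ℝ) →L[ℝ] ℝ => L (0, 1)) (hφc.fderiv ℝ)
      (by simp)
  have hpXcs : HasCompactSupport pX :=
    HasCompactSupport.comp_left (g := fun L : (ℝ × ℝ) →L[ℝ] ℝ => L (1, 0)) (hφc.fderiv ℝ)
      (by simp)
  have hpXXcs : HasCompactSupport pXX :=
    HasCompactSupport.comp_left (g := fun L : (ℝ × ℝ) →L[ℝ] ℝ => L (1, 0)) (hpXcs.fderiv ℝ)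
      (by simp)
  -- bounds
  obtain ⟨Cφ, hCφ⟩ : ∃ C, ∀ p, |φ' p| ≤ C :=
    abs_bound_of_compact_support hφs.continuous hφc
  obtain ⟨CT, hCT⟩ : ∃ C, ∀ p, |pT p| ≤ C :=
    abs_bound_of_compact_support hpTcont hpTcs
  obtain ⟨CXX, hCXX⟩ : ∃ C, ∀ p, |pXX p| ≤ C :=
    abs_bound_of_compact_support hpXXcont hpXXcs
  -- F facts on Ω
  have hFcΩ : ∀ p ∈ Ω, ContDiffAt ℝ (⊤ : ℕ∞) Fu p := fun p hp =>
    hFsmooth.contDiffAt (hΩopen.mem_nhds hp)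
  have hFucont : ContinuousOn Fu Ω := hFsmooth.continuousOn
  have hFXat : ∀ p ∈ Ω, ContDiffAt ℝ (⊤ : ℕ∞) FX p := fun p hp =>
    contDiffAt_fderiv_apply (1, 0) (hFcΩ p hp)
  have hFXcont : ContinuousOn FX Ω := fun p hp =>
    ((hFXat p hp).continuousAt).continuousWithinAt
  have hFTcont : ContinuousOn FT Ω := fun p hp =>
    ((contDiffAt_fderiv_apply (0, 1) (hFcΩ p hp)).continuousAt).continuousWithinAt
  have hFXXcont : ContinuousOn FXX Ω := fun p hp =>
    ((contDiffAt_fderiv_apply (1, 0) (hFXat p hp)).continuousAt).continuousWithinAt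
  have hFuslice : ∀ t ∈ Ioo (0:ℝ) T, Continuous (fun x => F x t) := by
    intro t ht
    exact hFucont.comp_continuous (f := fun x : ℝ => (x, t))
      (continuous_id.prodMk continuous_const) (fun x => Set.mk_mem_prod (mem_univ x) ht)
  have hFTslice : ∀ p ∈ Ω, HasDerivAt (fun τ => F p.1 τ) (FT p) p.2 := fun p hp =>
    slice_t_hasDerivAt ((hFcΩ p hp).differentiableAt (by simp))
  have hFXslice : ∀ p ∈ Ω, HasDerivAt (fun y => F y p.2) (FX p) p.1 := fun p hp =>
    slice_x_hasDerivAt ((hFcΩ p hp).differentiableAt (by simp))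
  have hFXXslice : ∀ p ∈ Ω, HasDerivAt (fun y => FX (y, p.2)) (FXX p) p.1 := fun p hp =>
    slice_x_hasDerivAt ((hFXat p hp).differentiableAt (by simp))
  -- translations of the pointwise hypotheses
  have hmemΩ : ∀ x : ℝ, ∀ t ∈ Ioo (0:ℝ) T, ((x, t) : ℝ × ℝ) ∈ Ω := fun x t ht => Set.mk_mem_prod (mem_univ x) ht
  have hheat' : ∀ x : ℝ, ∀ t ∈ Ioo (0:ℝ) T, FT (x, t) = FXX (x, t) := by
    intro x t ht
    have h1 : deriv (fun τ => F x τ) t = FT (x, t) :=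
      (hFTslice (x, t) (hmemΩ x t ht)).deriv
    have h2 : deriv (fun y => F y t) = fun y => FX (y, t) :=
      funext fun y => (hFXslice (y, t) (hmemΩ y t ht)).deriv
    have h3 : deriv (deriv (fun y => F y t)) x = FXX (x, t) := by
      rw [h2]; exact (hFXXslice (x, t) (hmemΩ x t ht)).deriv
    rw [← h1, ← h3]
    exact hheat x t ht
  have hstefan' : ∀ t ∈ Ioo (0:ℝ) T, (E_F - E_H) * deriv xs t = FX (xs t, t) := by
    intro t ht
    rw [hstefan t ht]
    exact (hFXslice (xs t, t) (hmemΩ _ t ht)).deriv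
  have heven' : ∀ x : ℝ, ∀ t ∈ Ioo (0:ℝ) T, FX (-x, t) = - FX (x, t) := by
    intro x t ht
    have h1 : HasDerivAt (fun y => F y t) (FX (x, t)) x := hFXslice (x, t) (hmemΩ x t ht)
    have h2 : HasDerivAt (fun y => F y t) (FX (-x, t)) (-x) := hFXslice (-x, t) (hmemΩ _ t ht)
    have h3 : HasDerivAt (fun y => F (-y) t) (FX (-x, t) * (-1)) x :=
      h2.comp x (hasDerivAt_neg x)
    have h4 : (fun y : ℝ => F (-y) t) = fun y => F y t := funext fun y => hFeven y t
    rw [h4] at h3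
    have := h3.unique h1
    linarith
  -- spatial bound R
  obtain ⟨R0, hR0⟩ := hφc.isBounded.subset_closedBall 0
  set R : ℝ := max R0 1 with hRdef
  have hφzero : ∀ p : ℝ × ℝ, R < |p.1| → φ' p = 0 := by
    intro p hp
    apply image_eq_zero_of_notMem_tsupport
    intro hmem
    have h := hR0 hmem
    rw [Metric.mem_closedBall, Prod.dist_eq] at h
    have h1 : dist p.1 0 ≤ R0 := le_trans (le_max_left _ _) h
    rw [Real.dist_eq, sub_zero] at h1
    have h2 : R0 ≤ R := le_max_left _ _
    linarith
  have hW1open : IsOpen {p : ℝ × ℝ | R < |p.1|} :=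
    isOpen_lt continuous_const continuous_fst.abs
  have hpX0 : ∀ p : ℝ × ℝ, R < |p.1| → pX p = 0 := fun p hp =>
    fderiv_apply_zero_on_open hW1open (fun q hq => hφzero q hq) (1,0) p hp
  have hpT0 : ∀ p : ℝ × ℝ, R < |p.1| → pT p = 0 := fun p hp =>
    fderiv_apply_zero_on_open hW1open (fun q hq => hφzero q hq) (0,1) p hp
  have hpXX0 : ∀ p : ℝ × ℝ, R < |p.1| → pXX p = 0 := fun p hp =>
    fderiv_apply_zero_on_open hW1open (fun q hq => hpX0 q hq) (1,0) p hp
  have hR1 : (1:ℝ) ≤ R := le_max_right _ _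
  -- basic E bounds
  have hEpos : ∀ t ∈ Ioo (0:ℝ) T, ∀ x : ℝ, 0 ≤ E x t := by
    intro t ht x
    rw [hE]
    split_ifs with h
    · linarith
    · push_neg at h
      exact (hFrange t ht x h).1
  have hEle : ∀ t ∈ Ioo (0:ℝ) T, ∀ x : ℝ, E x t ≤ max E_F E_H := by
    intro t ht x
    rw [hE]
    split_ifs with h
    · exact le_max_left _ _
    · push_neg at h
      exact le_trans (hFrange t ht x h).2 (le_max_right _ _)
  have hEmeas : ∀ t ∈ Ioo (0:ℝ) T, Measurable (fun x => E x t) := by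
    intro t ht
    have heq : (fun x => E x t) = fun x => if |x| < xs t then E_F else F x t :=
      funext fun x => hE x t
    rw [heq]
    exact Measurable.ite (measurableSet_lt measurable_abs measurable_const)
      measurable_const (hFuslice t ht).measurable
  -- degenerate case : empty support
  rcases (tsupport φ').eq_empty_or_nonempty with hKe | hKne
  · have hφ0 : ∀ p : ℝ × ℝ, ∀ _ : p ∈ (univ : Set (ℝ × ℝ)), φ' p = 0 := fun p _ =>
      image_eq_zero_of_notMem_tsupport (by simp [hKe])
    have hpT0' : ∀ p : ℝ × ℝ, pT p = 0 := fun p =>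
      fderiv_apply_zero_on_open isOpen_univ hφ0 (0,1) p (mem_univ p)
    have hpX0' : ∀ p : ℝ × ℝ, ∀ _ : p ∈ (univ : Set (ℝ × ℝ)), pX p = 0 := fun p _ =>
      fderiv_apply_zero_on_open isOpen_univ hφ0 (1,0) p (mem_univ p)
    have hpXX0' : ∀ p : ℝ × ℝ, pXX p = 0 := fun p =>
      fderiv_apply_zero_on_open isOpen_univ hpX0' (1,0) p (mem_univ p)
    have hred : ∀ t x : ℝ, E x t * deriv (fun τ => φ x τ) t
        + min (E x t) E_H * deriv (deriv (fun y => φ y t)) x = 0 := by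
      intro t x
      rw [derivφT, derivφXX, hpT0' (x,t), hpXX0' (x,t)]
      ring
    simp only [hred, integral_zero]
  -- main case
  set S : Set ℝ := Prod.snd '' tsupport φ' with hSdef
  have hScomp : IsCompact S := hφc.image continuous_snd
  have hSne : S.Nonempty := hKne.image _
  have hSsub : S ⊆ Ioo 0 T := by
    rintro s ⟨p, hp, rfl⟩
    exact (hφsupp hp).2
  set a : ℝ := sInf S with hadef
  set b : ℝ := sSup S with hbdef
  have haS : a ∈ S := hScomp.sInf_mem hSne
  have hbS : b ∈ S := hScomp.sSup_mem hSne
  have haI : a ∈ Ioo 0 T := hSsub haS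
  have hbI : b ∈ Ioo 0 T := hSsub hbS
  have hKt : ∀ p : ℝ × ℝ, p ∈ tsupport φ' → a ≤ p.2 ∧ p.2 ≤ b := fun p hp =>
    ⟨csInf_le hScomp.bddBelow ⟨p, hp, rfl⟩, le_csSup hScomp.bddAbove ⟨p, hp, rfl⟩⟩
  have hφzero_t : ∀ p : ℝ × ℝ, p.2 < a ∨ b < p.2 → φ' p = 0 := by
    intro p hp
    apply image_eq_zero_of_notMem_tsupport
    intro hmem
    rcases hKt p hmem with ⟨h1, h2⟩
    rcases hp with h | h <;> linarith
  have hW2open : IsOpen {p : ℝ × ℝ | p.2 < a ∨ b < p.2} :=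
    (isOpen_lt continuous_snd continuous_const).union
      (isOpen_lt continuous_const continuous_snd)
  have hpT0t : ∀ p : ℝ × ℝ, p.2 < a ∨ b < p.2 → pT p = 0 := fun p hp =>
    fderiv_apply_zero_on_open hW2open (fun q hq => hφzero_t q hq) (0,1) p hp
  have hpX0t : ∀ p : ℝ × ℝ, p.2 < a ∨ b < p.2 → pX p = 0 := fun p hp =>
    fderiv_apply_zero_on_open hW2open (fun q hq => hφzero_t q hq) (1,0) p hp
  have hpXX0t : ∀ p : ℝ × ℝ, p.2 < a ∨ b < p.2 → pXX p = 0 := fun p hp =>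
    fderiv_apply_zero_on_open hW2open (fun q hq => hpX0t q hq) (1,0) p hp
  have hab : a ≤ b := csInf_le_csSup hSne hScomp.bddBelow hScomp.bddAbove
  -- rewrite goal using pT, pXX
  simp only [derivφT, derivφXX]
  set J : ℝ → ℝ := fun t => ∫ x : ℝ, (E x t * pT (x, t) + min (E x t) E_H * pXX (x, t))
    with hJdef
  set I : ℝ → ℝ := fun t => ∫ x : ℝ, E x t * φ' (x, t) with hIdef
  show ∫ t in Ioo (0:ℝ) T, J t = 0
  have hIJ : ∀ t₀ ∈ Ioo (0:ℝ) T, HasDerivAt I (J t₀) t₀ := by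
    intro t₀ ht₀
    have hxscont : ContinuousAt xs t₀ :=
      (hxs.contDiffAt (isOpen_Ioo.mem_nhds ht₀)).continuousAt
    have hr₀pos : 0 < xs t₀ := hxspos t₀ ht₀
    have hxsd : HasDerivAt xs (deriv xs t₀) t₀ :=
      ((hxs.contDiffAt (isOpen_Ioo.mem_nhds ht₀)).differentiableAt one_ne_zero).hasDerivAt
    set r₀ : ℝ := xs t₀ with hr₀def
    set r' : ℝ := deriv xs t₀ with hr'def
    set M : ℝ := max R r₀ + 1 with hMdef
    have hRM : R < M := by rw [hMdef]; have := le_max_left R r₀; linarith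
    have hr₀M : r₀ < M := by rw [hMdef]; have := le_max_right R r₀; linarith
    have hM0 : 0 < M := by linarith
    have hCEnn : 0 ≤ max E_F E_H := le_trans hEH.le (le_max_right _ _)
    have hEabs : ∀ t ∈ Ioo (0:ℝ) T, ∀ x : ℝ, |E x t| ≤ max E_F E_H := by
      intro t ht x
      rw [abs_le]
      exact ⟨by have := hEpos t ht x; linarith, hEle t ht x⟩
    -- integrands
    set g : ℝ × ℝ → ℝ := fun p => Fu p * φ' p with hgdef
    set gT : ℝ × ℝ → ℝ := fun p => FT p * φ' p + Fu p * pT p with hgTdef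
    have hφcont : Continuous φ' := hφs.continuous
    have hgcont : ContinuousOn g Ω := hFucont.mul hφcont.continuousOn
    have hgTcont : ContinuousOn gT Ω :=
      (hFTcont.mul hφcont.continuousOn).add (hFucont.mul hpTcont.continuousOn)
    have hgd : ∀ p ∈ Ω, HasDerivAt (fun τ => g (p.1, τ)) (gT p) p.2 := by
      rintro ⟨x, t⟩ hp
      exact (hFTslice (x, t) hp).mul (hφT x t)
    have hφslice : ∀ t : ℝ, Continuous fun x : ℝ => φ' (x, t) := fun t =>
      hφcont.comp (continuous_id.prodMk continuous_const)
    have hpTslice : ∀ t : ℝ, Continuous fun x : ℝ => pT (x, t) := fun t =>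
      hpTcont.comp (continuous_id.prodMk continuous_const)
    have hpXXslice : ∀ t : ℝ, Continuous fun x : ℝ => pXX (x, t) := fun t =>
      hpXXcont.comp (continuous_id.prodMk continuous_const)
    have hgslice : ∀ t ∈ Ioo (0:ℝ) T, Continuous fun x : ℝ => g (x, t) := fun t ht =>
      (hFuslice t ht).mul (hφslice t)
    have hsubΩ : ∀ u v : ℝ, uIcc u v ×ˢ ({t₀} : Set ℝ) ⊆ Ω := by
      intro u v p hp
      have h2 : p.2 = t₀ := hp.2
      exact Set.mem_prod.2 ⟨mem_univ _, by rw [h2]; exact ht₀⟩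
    -- interval integrability of the E-integrands
    have hh_ii : ∀ t ∈ Ioo (0:ℝ) T, ∀ u v : ℝ,
        IntervalIntegrable (fun x => E x t * φ' (x, t)) volume u v := by
      intro t ht u v
      rw [intervalIntegrable_iff]
      apply MeasureTheory.Measure.integrableOn_of_bounded (M := (max E_F E_H) * Cφ)
      · exact measure_Ioc_lt_top.ne
      · exact ((hEmeas t ht).mul (hφslice t).measurable).aestronglyMeasurable
      · apply Filter.Eventually.of_forall
        intro x
        rw [Real.norm_eq_abs, abs_mul]
        exact mul_le_mul (hEabs t ht x) (hCφ (x, t)) (abs_nonneg _) hCEnn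
    -- splitting of I near t₀
    have hIsplit : ∀ t ∈ Ioo (0:ℝ) T, xs t < M →
        I t = (∫ x in (-M)..(-xs t), g (x, t))
          + E_F * (∫ x in (-xs t)..(xs t), φ' (x, t))
          + (∫ x in (xs t)..M, g (x, t)) := by
      intro t ht hMt
      have h0 : 0 < xs t := hxspos t ht
      have hv : ∀ x ∉ Ioc (-M) M, E x t * φ' (x, t) = 0 := by
        intro x hx
        rw [mem_Ioc, not_and_or] at hx
        have hRx : R < |x| := by
          rcases hx with h | h
          · push_neg at h
            rw [abs_of_neg (by linarith : x < 0)]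
            linarith
          · push_neg at h
            rw [abs_of_pos (by linarith : 0 < x)]
            linarith
        rw [hφzero (x, t) hRx, mul_zero]
      have e1 : I t = ∫ x in Ioc (-M) M, E x t * φ' (x, t) :=
        (setIntegral_eq_integral_of_forall_compl_eq_zero hv).symm
      have i1 := hh_ii t ht (-M) (-xs t)
      have i2 := hh_ii t ht (-xs t) (xs t)
      have i3 := hh_ii t ht (xs t) M
      have e2 : ∫ x in Ioc (-M) M, E x t * φ' (x, t)
          = (∫ x in (-M)..(-xs t), E x t * φ' (x, t))
            + (∫ x in (-xs t)..(xs t), E x t * φ' (x, t))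
            + (∫ x in (xs t)..M, E x t * φ' (x, t)) := by
        rw [← intervalIntegral.integral_of_le (by linarith : -M ≤ M),
          ← intervalIntegral.integral_add_adjacent_intervals (i1.trans i2) i3,
          ← intervalIntegral.integral_add_adjacent_intervals i1 i2]
      have p1 : (∫ x in (-M)..(-xs t), E x t * φ' (x, t)) = ∫ x in (-M)..(-xs t), g (x, t) := by
        apply intervalIntegral.integral_congr
        intro x hx
        rw [uIcc_of_le (by linarith : -M ≤ -xs t)] at hx
        have : xs t ≤ |x| := by
          rw [abs_of_neg (by linarith [hx.2] : x < 0)]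
          linarith [hx.2]
        show E x t * φ' (x, t) = g (x, t)
        rw [hE, if_neg (by push_neg; exact this)]
      have p3 : (∫ x in (xs t)..M, E x t * φ' (x, t)) = ∫ x in (xs t)..M, g (x, t) := by
        apply intervalIntegral.integral_congr
        intro x hx
        rw [uIcc_of_le (by linarith : xs t ≤ M)] at hx
        have : xs t ≤ |x| := by
          rw [abs_of_pos (by linarith [hx.1] : 0 < x)]
          exact hx.1
        show E x t * φ' (x, t) = g (x, t)
        rw [hE, if_neg (by push_neg; exact this)]
      have p2 : (∫ x in (-xs t)..(xs t), E x t * φ' (x, t))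
          = E_F * ∫ x in (-xs t)..(xs t), φ' (x, t) := by
        rw [← intervalIntegral.integral_const_mul]
        apply intervalIntegral.integral_congr_ae
        filter_upwards [ae_ne_real (xs t)] with x hxne hxmem
        rw [uIoc_of_le (by linarith : -xs t ≤ xs t), mem_Ioc] at hxmem
        have hxlt : |x| < xs t := by
          rw [abs_lt]
          exact ⟨hxmem.1, lt_of_le_of_ne hxmem.2 hxne⟩
        show E x t * φ' (x, t) = E_F * φ' (x, t)
        rw [hE, if_pos hxlt]
      rw [e1, e2, p1, p2, p3]
    -- splitting of J at t₀
    have hJsplit : J t₀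
        = (∫ x in (-M)..(-r₀), (Fu (x, t₀) * pT (x, t₀) + Fu (x, t₀) * pXX (x, t₀)))
          + (∫ x in (-r₀)..r₀, (E_F * pT (x, t₀) + E_H * pXX (x, t₀)))
          + (∫ x in r₀..M, (Fu (x, t₀) * pT (x, t₀) + Fu (x, t₀) * pXX (x, t₀))) := by
      have hminbd : ∀ x : ℝ, |min (E x t₀) E_H| ≤ max E_F E_H := by
        intro x
        rw [abs_le]
        constructor
        · have h0 : (0:ℝ) ≤ min (E x t₀) E_H := le_min (hEpos t₀ ht₀ x) hEH.le
          linarith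
        · exact le_trans (min_le_right _ _) (le_max_right _ _)
      have hq_ii : ∀ u v : ℝ, IntervalIntegrable
          (fun x => E x t₀ * pT (x, t₀) + min (E x t₀) E_H * pXX (x, t₀)) volume u v := by
        intro u v
        rw [intervalIntegrable_iff]
        apply MeasureTheory.Measure.integrableOn_of_bounded
          (M := (max E_F E_H) * CT + (max E_F E_H) * CXX)
        · exact measure_Ioc_lt_top.ne
        · exact (((hEmeas t₀ ht₀).mul (hpTslice t₀).measurable).add
            (((hEmeas t₀ ht₀).min measurable_const).mul
              (hpXXslice t₀).measurable)).aestronglyMeasurable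
        · apply Filter.Eventually.of_forall
          intro x
          have h1 : |E x t₀ * pT (x, t₀)| ≤ (max E_F E_H) * CT := by
            rw [abs_mul]
            exact mul_le_mul (hEabs t₀ ht₀ x) (hCT (x, t₀)) (abs_nonneg _) hCEnn
          have h2 : |min (E x t₀) E_H * pXX (x, t₀)| ≤ (max E_F E_H) * CXX := by
            rw [abs_mul]
            exact mul_le_mul (hminbd x) (hCXX (x, t₀)) (abs_nonneg _) hCEnn
          calc ‖E x t₀ * pT (x, t₀) + min (E x t₀) E_H * pXX (x, t₀)‖
              ≤ |E x t₀ * pT (x, t₀)| + |min (E x t₀) E_H * pXX (x, t₀)| := abs_add_le _ _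
            _ ≤ (max E_F E_H) * CT + (max E_F E_H) * CXX := add_le_add h1 h2
      have hvJ : ∀ x ∉ Ioc (-M) M,
          E x t₀ * pT (x, t₀) + min (E x t₀) E_H * pXX (x, t₀) = 0 := by
        intro x hx
        rw [mem_Ioc, not_and_or] at hx
        have hRx : R < |x| := by
          rcases hx with h | h
          · push_neg at h
            rw [abs_of_neg (by linarith : x < 0)]
            linarith
          · push_neg at h
            rw [abs_of_pos (by linarith : 0 < x)]
            linarith
        rw [hpT0 (x, t₀) hRx, hpXX0 (x, t₀) hRx]
        ring
      have e0 : J t₀ = ∫ x : ℝ, (E x t₀ * pT (x, t₀) + min (E x t₀) E_H * pXX (x, t₀)) := rfl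
      have i1 := hq_ii (-M) (-r₀)
      have i2 := hq_ii (-r₀) r₀
      have i3 := hq_ii r₀ M
      have e2 : ∫ x in Ioc (-M) M, (E x t₀ * pT (x, t₀) + min (E x t₀) E_H * pXX (x, t₀))
          = (∫ x in (-M)..(-r₀), (E x t₀ * pT (x, t₀) + min (E x t₀) E_H * pXX (x, t₀)))
            + (∫ x in (-r₀)..r₀, (E x t₀ * pT (x, t₀) + min (E x t₀) E_H * pXX (x, t₀)))
            + (∫ x in r₀..M, (E x t₀ * pT (x, t₀) + min (E x t₀) E_H * pXX (x, t₀))) := by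
        rw [← intervalIntegral.integral_of_le (by linarith : -M ≤ M),
          ← intervalIntegral.integral_add_adjacent_intervals (i1.trans i2) i3,
          ← intervalIntegral.integral_add_adjacent_intervals i1 i2]
      have hout : ∀ x : ℝ, xs t₀ ≤ |x| →
          E x t₀ * pT (x, t₀) + min (E x t₀) E_H * pXX (x, t₀)
          = Fu (x, t₀) * pT (x, t₀) + Fu (x, t₀) * pXX (x, t₀) := by
        intro x hge
        have hEF : E x t₀ = F x t₀ := by rw [hE, if_neg (by push_neg; exact hge)]
        have hmin : min (F x t₀) E_H = F x t₀ := min_eq_left (hFrange t₀ ht₀ x hge).2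
        rw [hEF, hmin]
      have p1 : (∫ x in (-M)..(-r₀), (E x t₀ * pT (x, t₀) + min (E x t₀) E_H * pXX (x, t₀)))
          = ∫ x in (-M)..(-r₀), (Fu (x, t₀) * pT (x, t₀) + Fu (x, t₀) * pXX (x, t₀)) := by
        apply intervalIntegral.integral_congr
        intro x hx
        rw [uIcc_of_le (by linarith : -M ≤ -r₀)] at hx
        have hge : xs t₀ ≤ |x| := by
          rw [abs_of_neg (by linarith [hx.2] : x < 0)]
          linarith [hx.2]
        exact hout x hge
      have p3 : (∫ x in r₀..M, (E x t₀ * pT (x, t₀) + min (E x t₀) E_H * pXX (x, t₀)))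
          = ∫ x in r₀..M, (Fu (x, t₀) * pT (x, t₀) + Fu (x, t₀) * pXX (x, t₀)) := by
        apply intervalIntegral.integral_congr
        intro x hx
        rw [uIcc_of_le (by linarith : r₀ ≤ M)] at hx
        have hge : xs t₀ ≤ |x| := by
          rw [abs_of_pos (by linarith [hx.1] : 0 < x)]
          exact hx.1
        exact hout x hge
      have p2 : (∫ x in (-r₀)..r₀, (E x t₀ * pT (x, t₀) + min (E x t₀) E_H * pXX (x, t₀)))
          = ∫ x in (-r₀)..r₀, (E_F * pT (x, t₀) + E_H * pXX (x, t₀)) := by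
        apply intervalIntegral.integral_congr_ae
        filter_upwards [ae_ne_real (xs t₀)] with x hxne hxmem
        rw [uIoc_of_le (by linarith : -r₀ ≤ r₀), mem_Ioc] at hxmem
        have hxlt : |x| < xs t₀ := by
          rw [abs_lt]
          exact ⟨hxmem.1, lt_of_le_of_ne hxmem.2 hxne⟩
        show E x t₀ * pT (x, t₀) + min (E x t₀) E_H * pXX (x, t₀)
          = E_F * pT (x, t₀) + E_H * pXX (x, t₀)
        rw [hE, if_pos hxlt, min_eq_right (le_of_lt hEHF)]
      rw [e0, ← setIntegral_eq_integral_of_forall_compl_eq_zero hvJ, e2, p1, p2, p3]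
    -- eventual decomposition of I
    have hev : ∀ᶠ t in nhds t₀, t ∈ Ioo (0:ℝ) T ∧ xs t < M :=
      (isOpen_Ioo.eventually_mem ht₀).and (hxscont.eventually (eventually_lt_nhds hr₀M))
    have hIev : I =ᶠ[nhds t₀] fun t => (∫ x in (-M)..(-xs t), g (x, t))
        + E_F * (∫ x in (-xs t)..(xs t), φ' (x, t)) + (∫ x in (xs t)..M, g (x, t)) := by
      filter_upwards [hev] with t ht
      exact hIsplit t ht.1 ht.2
    -- derivatives of the three pieces
    have hmem1 : ((-r₀, t₀) : ℝ × ℝ) ∈ Ω := hmemΩ (-r₀) t₀ ht₀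
    have hmem2 : ((r₀, t₀) : ℝ × ℝ) ∈ Ω := hmemΩ r₀ t₀ ht₀
    have d1a : HasDerivAt (fun t => ∫ x in (-M)..(-r₀), g (x, t))
        (∫ x in (-M)..(-r₀), gT (x, t₀)) t₀ :=
      hasDerivAt_param_integral g gT hΩopen hgcont hgTcont hgd (-M) (-r₀) t₀ (hsubΩ _ _)
    have d1b : HasDerivAt (fun t => ∫ x in (-r₀)..(-xs t), g (x, t))
        ((-r') * g (-r₀, t₀)) t₀ :=
      hasDerivAt_moving_endpoint g hΩopen hgcont hmem1 hxsd.neg (by rw [hr₀def])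
    have hT1ev : (fun t => ∫ x in (-M)..(-xs t), g (x, t)) =ᶠ[nhds t₀]
        fun t => (∫ x in (-M)..(-r₀), g (x, t)) + (∫ x in (-r₀)..(-xs t), g (x, t)) := by
      filter_upwards [hev] with t ht
      exact (intervalIntegral.integral_add_adjacent_intervals
        ((hgslice t ht.1).intervalIntegrable _ _)
        ((hgslice t ht.1).intervalIntegrable _ _)).symm
    have hD1 : HasDerivAt (fun t => ∫ x in (-M)..(-xs t), g (x, t))
        ((∫ x in (-M)..(-r₀), gT (x, t₀)) + (-r') * g (-r₀, t₀)) t₀ :=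
      (d1a.add d1b).congr_of_eventuallyEq hT1ev
    have d2a : HasDerivAt (fun t => ∫ x in (-r₀)..(-xs t), φ' (x, t))
        ((-r') * φ' (-r₀, t₀)) t₀ :=
      hasDerivAt_moving_endpoint φ' isOpen_univ hφcont.continuousOn (mem_univ _)
        hxsd.neg (by rw [hr₀def])
    have d2b : HasDerivAt (fun t => ∫ x in (-r₀)..r₀, φ' (x, t))
        (∫ x in (-r₀)..r₀, pT (x, t₀)) t₀ :=
      hasDerivAt_param_integral φ' pT isOpen_univ hφcont.continuousOn
        hpTcont.continuousOn (fun p _ => hφT p.1 p.2) (-r₀) r₀ t₀ (subset_univ _)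
    have d2c : HasDerivAt (fun t => ∫ x in r₀..(xs t), φ' (x, t))
        (r' * φ' (r₀, t₀)) t₀ :=
      hasDerivAt_moving_endpoint φ' isOpen_univ hφcont.continuousOn (mem_univ _)
        hxsd (by rw [hr₀def])
    have hT2eq : (fun t => ∫ x in (-xs t)..(xs t), φ' (x, t))
        = fun t => (-(∫ x in (-r₀)..(-xs t), φ' (x, t)) + ∫ x in (-r₀)..r₀, φ' (x, t))
          + ∫ x in r₀..(xs t), φ' (x, t) := by
      funext t
      rw [← intervalIntegral.integral_symm, intervalIntegral.integral_add_adjacent_intervals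
        ((hφslice t).intervalIntegrable _ _) ((hφslice t).intervalIntegrable _ _),
        intervalIntegral.integral_add_adjacent_intervals
        ((hφslice t).intervalIntegrable _ _) ((hφslice t).intervalIntegrable _ _)]
    have hD2inner : HasDerivAt (fun t => ∫ x in (-xs t)..(xs t), φ' (x, t))
        ((-((-r') * φ' (-r₀, t₀)) + ∫ x in (-r₀)..r₀, pT (x, t₀)) + r' * φ' (r₀, t₀)) t₀ := by
      rw [hT2eq]
      exact (d2a.neg.add d2b).add d2c
    have hD2 : HasDerivAt (fun t => E_F * ∫ x in (-xs t)..(xs t), φ' (x, t))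
        (E_F * ((-((-r') * φ' (-r₀, t₀)) + ∫ x in (-r₀)..r₀, pT (x, t₀)) + r' * φ' (r₀, t₀)))
        t₀ := hD2inner.const_mul E_F
    have d3a : HasDerivAt (fun t => ∫ x in r₀..(xs t), g (x, t)) (r' * g (r₀, t₀)) t₀ :=
      hasDerivAt_moving_endpoint g hΩopen hgcont hmem2 hxsd (by rw [hr₀def])
    have d3b : HasDerivAt (fun t => ∫ x in r₀..M, g (x, t))
        (∫ x in r₀..M, gT (x, t₀)) t₀ :=
      hasDerivAt_param_integral g gT hΩopen hgcont hgTcont hgd r₀ M t₀ (hsubΩ _ _)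
    have hT3ev : (fun t => ∫ x in (xs t)..M, g (x, t)) =ᶠ[nhds t₀]
        fun t => -(∫ x in r₀..(xs t), g (x, t)) + ∫ x in r₀..M, g (x, t) := by
      filter_upwards [hev] with t ht
      rw [← intervalIntegral.integral_symm, intervalIntegral.integral_add_adjacent_intervals
        ((hgslice t ht.1).intervalIntegrable _ _) ((hgslice t ht.1).intervalIntegrable _ _)]
    have hD3 : HasDerivAt (fun t => ∫ x in (xs t)..M, g (x, t))
        (-(r' * g (r₀, t₀)) + ∫ x in r₀..M, gT (x, t₀)) t₀ :=
      (d3a.neg.add d3b).congr_of_eventuallyEq hT3ev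
    have hDI : HasDerivAt I
        (((∫ x in (-M)..(-r₀), gT (x, t₀)) + (-r') * g (-r₀, t₀))
          + E_F * ((-((-r') * φ' (-r₀, t₀)) + ∫ x in (-r₀)..r₀, pT (x, t₀)) + r' * φ' (r₀, t₀))
          + (-(r' * g (r₀, t₀)) + ∫ x in r₀..M, gT (x, t₀))) t₀ :=
      ((hD1.add hD2).add hD3).congr_of_eventuallyEq hIev
    have hFuc : Continuous fun x : ℝ => Fu (x, t₀) := hFuslice t₀ ht₀
    have hFTc : Continuous fun x : ℝ => FT (x, t₀) :=
      hFTcont.comp_continuous (f := fun x : ℝ => (x, t₀))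
        (continuous_id.prodMk continuous_const) (fun x => hmemΩ x t₀ ht₀)
    have hFXc : Continuous fun x : ℝ => FX (x, t₀) :=
      hFXcont.comp_continuous (f := fun x : ℝ => (x, t₀))
        (continuous_id.prodMk continuous_const) (fun x => hmemΩ x t₀ ht₀)
    have hFXXc : Continuous fun x : ℝ => FXX (x, t₀) :=
      hFXXcont.comp_continuous (f := fun x : ℝ => (x, t₀))
        (continuous_id.prodMk continuous_const) (fun x => hmemΩ x t₀ ht₀)
    have hpXslice : ∀ t : ℝ, Continuous fun x : ℝ => pX (x, t) := fun t =>
      hpXcont.comp (continuous_id.prodMk continuous_const)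
    have hgTint : ∀ c d : ℝ, (∫ x in c..d, gT (x, t₀))
        = (∫ x in c..d, FXX (x, t₀) * φ' (x, t₀))
          + ∫ x in c..d, Fu (x, t₀) * pT (x, t₀) := by
      intro c d
      have h1 : (∫ x in c..d, gT (x, t₀))
          = (∫ x in c..d, FT (x, t₀) * φ' (x, t₀))
            + ∫ x in c..d, Fu (x, t₀) * pT (x, t₀) :=
        intervalIntegral.integral_add ((hFTc.mul (hφslice t₀)).intervalIntegrable _ _)
          ((hFuc.mul (hpTslice t₀)).intervalIntegrable _ _)
      rw [h1]
      congr 1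
      apply intervalIntegral.integral_congr
      intro x _
      show FT (x, t₀) * φ' (x, t₀) = FXX (x, t₀) * φ' (x, t₀)
      rw [hheat' x t₀ ht₀]
    have hIBP : ∀ c d : ℝ, (∫ x in c..d, FXX (x, t₀) * φ' (x, t₀))
        = FX (d, t₀) * φ' (d, t₀) - FX (c, t₀) * φ' (c, t₀)
          - (Fu (d, t₀) * pX (d, t₀) - Fu (c, t₀) * pX (c, t₀))
          + ∫ x in c..d, Fu (x, t₀) * pXX (x, t₀) := by
      intro c d
      have s1 := intervalIntegral.integral_mul_deriv_eq_deriv_mul (a := c) (b := d)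
        (u := fun x => φ' (x, t₀)) (u' := fun x => pX (x, t₀))
        (v := fun x => FX (x, t₀)) (v' := fun x => FXX (x, t₀))
        (fun x _ => hφX x t₀) (fun x _ => hFXXslice (x, t₀) (hmemΩ x t₀ ht₀))
        ((hpXslice t₀).intervalIntegrable _ _) (hFXXc.intervalIntegrable _ _)
      have s2 := intervalIntegral.integral_mul_deriv_eq_deriv_mul (a := c) (b := d)
        (u := fun x => pX (x, t₀)) (u' := fun x => pXX (x, t₀))
        (v := fun x => Fu (x, t₀)) (v' := fun x => FX (x, t₀))
        (fun x _ => hφXX x t₀) (fun x _ => hFXslice (x, t₀) (hmemΩ x t₀ ht₀))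
        ((hpXXslice t₀).intervalIntegrable _ _) (hFXc.intervalIntegrable _ _)
      have c1 : (∫ x in c..d, FXX (x, t₀) * φ' (x, t₀))
          = ∫ x in c..d, φ' (x, t₀) * FXX (x, t₀) :=
        intervalIntegral.integral_congr fun x _ => mul_comm _ _
      have c2 : (∫ x in c..d, pXX (x, t₀) * Fu (x, t₀))
          = ∫ x in c..d, Fu (x, t₀) * pXX (x, t₀) :=
        intervalIntegral.integral_congr fun x _ => mul_comm _ _
      rw [c1, s1, s2, c2]
      ring
    have hmid : (∫ x in (-r₀)..r₀, pXX (x, t₀)) = pX (r₀, t₀) - pX (-r₀, t₀) :=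
      intervalIntegral.integral_eq_sub_of_hasDerivAt (fun x _ => hφXX x t₀)
        ((hpXXslice t₀).intervalIntegrable _ _)
    have hQ13 : ∀ c d : ℝ,
        (∫ x in c..d, (Fu (x, t₀) * pT (x, t₀) + Fu (x, t₀) * pXX (x, t₀)))
        = (∫ x in c..d, Fu (x, t₀) * pT (x, t₀))
          + ∫ x in c..d, Fu (x, t₀) * pXX (x, t₀) := fun c d =>
      intervalIntegral.integral_add ((hFuc.mul (hpTslice t₀)).intervalIntegrable _ _)
        ((hFuc.mul (hpXXslice t₀)).intervalIntegrable _ _)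
    have hQ2 : (∫ x in (-r₀)..r₀, (E_F * pT (x, t₀) + E_H * pXX (x, t₀)))
        = E_F * (∫ x in (-r₀)..r₀, pT (x, t₀))
          + E_H * (pX (r₀, t₀) - pX (-r₀, t₀)) := by
      rw [intervalIntegral.integral_add (f := fun x => E_F * pT (x, t₀))
        (g := fun x => E_H * pXX (x, t₀))
        ((continuous_const.mul (hpTslice t₀)).intervalIntegrable _ _)
        ((continuous_const.mul (hpXXslice t₀)).intervalIntegrable _ _),
        intervalIntegral.integral_const_mul, intervalIntegral.integral_const_mul, hmid]
    have hφM : φ' (M, t₀) = 0 := hφzero _ (by rw [abs_of_pos hM0]; exact hRM)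
    have hφmM : φ' (-M, t₀) = 0 := hφzero _ (by rw [abs_neg, abs_of_pos hM0]; exact hRM)
    have hpXM : pX (M, t₀) = 0 := hpX0 _ (by rw [abs_of_pos hM0]; exact hRM)
    have hpXmM : pX (-M, t₀) = 0 := hpX0 _ (by rw [abs_neg, abs_of_pos hM0]; exact hRM)
    have hFup : Fu (r₀, t₀) = E_H := hinterface t₀ ht₀
    have hFum : Fu (-r₀, t₀) = E_H := by
      show F (-r₀) t₀ = E_H
      rw [hFeven]
      exact hinterface t₀ ht₀
    have hfm : FX (-r₀, t₀) = - FX (r₀, t₀) := heven' r₀ t₀ ht₀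
    have hstef : (E_F - E_H) * r' = FX (r₀, t₀) := hstefan' t₀ ht₀
    have hfinal : ((∫ x in (-M)..(-r₀), gT (x, t₀)) + (-r') * g (-r₀, t₀))
          + E_F * ((-((-r') * φ' (-r₀, t₀)) + ∫ x in (-r₀)..r₀, pT (x, t₀))
            + r' * φ' (r₀, t₀))
          + (-(r' * g (r₀, t₀)) + ∫ x in r₀..M, gT (x, t₀)) = J t₀ := by
      rw [hJsplit, hgTint, hgTint, hIBP, hIBP, hQ13, hQ13, hQ2]
      simp only [hgdef]
      rw [hφM, hφmM, hpXM, hpXmM, hFup, hFum, hfm]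
      linear_combination (φ' (r₀, t₀) + φ' (-r₀, t₀)) * hstef
    rw [← hfinal]
    exact hDI
  have hJcont : ∀ t₀ ∈ Ioo (0:ℝ) T, ContinuousAt J t₀ := by
    intro t₀ ht₀
    have hxscont : ContinuousAt xs t₀ :=
      (hxs.contDiffAt (isOpen_Ioo.mem_nhds ht₀)).continuousAt
    have hr₀pos : 0 < xs t₀ := hxspos t₀ ht₀
    have hCEnn : 0 ≤ max E_F E_H := le_trans hEH.le (le_max_right _ _)
    have hminbd : ∀ t ∈ Ioo (0:ℝ) T, ∀ x : ℝ, |min (E x t) E_H| ≤ max E_F E_H := by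
      intro t ht x
      rw [abs_le]
      constructor
      · have h0 : (0:ℝ) ≤ min (E x t) E_H := le_min (hEpos t ht x) hEH.le
        linarith
      · exact le_trans (min_le_right _ _) (le_max_right _ _)
    have hEabs : ∀ t ∈ Ioo (0:ℝ) T, ∀ x : ℝ, |E x t| ≤ max E_F E_H := by
      intro t ht x
      rw [abs_le]
      constructor
      · have := hEpos t ht x; linarith
      · exact hEle t ht x
    apply MeasureTheory.continuousAt_of_dominated (bound := fun x =>
      (Icc (-R) R).indicator (fun _ => (max E_F E_H) * CT + (max E_F E_H) * CXX) x)
    · filter_upwards [isOpen_Ioo.eventually_mem ht₀] with t ht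
      apply Measurable.aestronglyMeasurable
      apply Measurable.add
      · exact (hEmeas t ht).mul
          (hpTcont.comp (continuous_id.prodMk continuous_const)).measurable
      · exact ((hEmeas t ht).min measurable_const).mul
          (hpXXcont.comp (continuous_id.prodMk continuous_const)).measurable
    · filter_upwards [isOpen_Ioo.eventually_mem ht₀] with t ht
      apply Filter.Eventually.of_forall
      intro x
      by_cases hx : x ∈ Icc (-R) R
      · rw [indicator_of_mem hx]
        have h1 : |E x t * pT (x, t)| ≤ (max E_F E_H) * CT := by
          rw [abs_mul]
          exact mul_le_mul (hEabs t ht x) (hCT (x, t)) (abs_nonneg _) hCEnn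
        have h2 : |min (E x t) E_H * pXX (x, t)| ≤ (max E_F E_H) * CXX := by
          rw [abs_mul]
          exact mul_le_mul (hminbd t ht x) (hCXX (x, t)) (abs_nonneg _) hCEnn
        calc ‖E x t * pT (x, t) + min (E x t) E_H * pXX (x, t)‖
            ≤ |E x t * pT (x, t)| + |min (E x t) E_H * pXX (x, t)| := abs_add_le _ _
          _ ≤ (max E_F E_H) * CT + (max E_F E_H) * CXX := add_le_add h1 h2
      · rw [indicator_of_notMem hx]
        have hxR : R < |x| := by
          rw [mem_Icc] at hx
          rcases not_and_or.1 hx with h | h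
          · push_neg at h; rw [abs_of_neg (by linarith : x < 0)]; linarith
          · push_neg at h; rw [abs_of_pos (by linarith : 0 < x)]; linarith
        rw [hpT0 (x, t) hxR, hpXX0 (x, t) hxR]
        simp
    · rw [MeasureTheory.integrable_indicator_iff measurableSet_Icc]
      apply (MeasureTheory.integrableOn_const_iff (hC := by finiteness)).2
      exact Or.inr measure_Icc_lt_top
    · filter_upwards [(ae_ne_real (xs t₀)).and (ae_ne_real (-(xs t₀)))] with x hx
      rcases lt_trichotomy |x| (xs t₀) with hlt | heq | hgt
      · have hev : ∀ᶠ t in nhds t₀, |x| < xs t := hxscont.eventually (eventually_gt_nhds hlt)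
        have hbase : ContinuousAt (fun t => E_F * pT (x, t)
            + min E_F E_H * pXX (x, t)) t₀ := by
          apply ContinuousAt.add
          · exact (continuousAt_const.mul
              ((hpTcont.comp (continuous_const.prodMk continuous_id)).continuousAt))
          · exact (continuousAt_const.mul
              ((hpXXcont.comp (continuous_const.prodMk continuous_id)).continuousAt))
        apply hbase.congr
        filter_upwards [hev] with t ht
        rw [hE, if_pos ht]
      · exfalso
        rcases abs_eq (le_of_lt hr₀pos) |>.1 heq with h | h
        · exact hx.1 h
        · exact hx.2 h
      · have hev : ∀ᶠ t in nhds t₀, xs t < |x| := hxscont.eventually (eventually_lt_nhds hgt)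
        have hFc : ContinuousAt (fun t => F x t) t₀ := by
          have := (hFucont.continuousAt (hΩopen.mem_nhds (hmemΩ x t₀ ht₀)))
          exact this.comp ((continuous_const.prodMk continuous_id).continuousAt)
        have hbase : ContinuousAt (fun t => F x t * pT (x, t)
            + min (F x t) E_H * pXX (x, t)) t₀ := by
          apply ContinuousAt.add
          · exact hFc.mul ((hpTcont.comp (continuous_const.prodMk continuous_id)).continuousAt)
          · exact (hFc.min continuousAt_const).mul
              ((hpXXcont.comp (continuous_const.prodMk continuous_id)).continuousAt)
        apply hbase.congr
        filter_upwards [hev] with t ht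
        rw [hE, if_neg (by push_neg; linarith)]
  have hJzero : ∀ t ∈ Ioo (0:ℝ) T, t < a ∨ b < t → J t = 0 := by
    intro t _ hout
    show (∫ x : ℝ, (E x t * pT (x, t) + min (E x t) E_H * pXX (x, t))) = 0
    have hz : (fun x : ℝ => E x t * pT (x, t) + min (E x t) E_H * pXX (x, t))
        = fun _ => 0 := by
      funext x
      rw [hpT0t (x, t) hout, hpXX0t (x, t) hout]
      ring
    rw [hz, MeasureTheory.integral_zero]
  have hIzero : ∀ t : ℝ, t < a ∨ b < t → I t = 0 := by
    intro t hout
    show (∫ x : ℝ, E x t * φ' (x, t)) = 0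
    have hz : (fun x : ℝ => E x t * φ' (x, t)) = fun _ => 0 := by
      funext x
      rw [hφzero_t (x, t) hout, mul_zero]
    rw [hz, MeasureTheory.integral_zero]
  set a' : ℝ := a / 2 with ha'def
  set b' : ℝ := (b + T) / 2 with hb'def
  have ha'pos : 0 < a' := by have := haI.1; rw [ha'def]; linarith
  have ha'a : a' < a := by have := haI.1; rw [ha'def]; linarith
  have hb'b : b < b' := by have := hbI.2; rw [hb'def]; linarith
  have hb'T : b' < T := by have := hbI.2; rw [hb'def]; linarith
  have ha'b' : a' ≤ b' := by linarith
  have hsub1 : Ioc a' b' ⊆ Ioo 0 T := fun t ht =>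
    ⟨lt_trans ha'pos ht.1, lt_of_le_of_lt ht.2 hb'T⟩
  have hind : (Ioo (0:ℝ) T).indicator J = (Ioc a' b').indicator J := by
    funext t
    by_cases h1 : t ∈ Ioc a' b'
    · rw [indicator_of_mem h1, indicator_of_mem (hsub1 h1)]
    · rw [indicator_of_notMem h1]
      by_cases h2 : t ∈ Ioo 0 T
      · rw [indicator_of_mem h2]
        refine hJzero t h2 ?_
        simp only [mem_Ioc, not_and_or, not_lt, not_le] at h1
        rcases h1 with h | h
        · exact Or.inl (lt_of_le_of_lt h ha'a)
        · exact Or.inr (lt_trans hb'b h)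
      · rw [indicator_of_notMem h2]
  have heq1 : ∫ t in Ioo (0:ℝ) T, J t = ∫ t in Ioc a' b', J t := by
    rw [← MeasureTheory.integral_indicator measurableSet_Ioo, hind, MeasureTheory.integral_indicator measurableSet_Ioc]
  have htmem : ∀ t ∈ uIcc a' b', t ∈ Ioo (0:ℝ) T := by
    intro t ht
    rw [uIcc_of_le ha'b'] at ht
    exact ⟨lt_of_lt_of_le ha'pos ht.1, lt_of_le_of_lt ht.2 hb'T⟩
  have hJint : IntervalIntegrable J volume a' b' := by
    apply ContinuousOn.intervalIntegrable
    intro t ht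
    exact (hJcont t (htmem t ht)).continuousWithinAt
  have heq3 : ∫ t in a'..b', J t = I b' - I a' :=
    intervalIntegral.integral_eq_sub_of_hasDerivAt (fun t ht => hIJ t (htmem t ht)) hJint
  rw [heq1, ← intervalIntegral.integral_of_le ha'b', heq3,
    hIzero b' (Or.inr hb'b), hIzero a' (Or.inl ha'a), sub_zero]
end

section
/- Fix T ∈ ℝ and define E : ℝ × (−∞,T) → ℝ by E(x,t) = (T − t) [ 1 − ((1 − e^{−√2 x})/(1 + e^{−√2 x}))² ]. Then E(x,t) > 0 for all x ∈ ℝ and t < T, and E satisfies the very fast diffusion equation with exponent m = 0: ∂E/∂t(x,t) = ∂/∂x [ E(x,t)^{−1} ∂E/∂x(x,t) ] for all x ∈ ℝ and t < T. In particular E is a solution that vanishes identically at time T. -/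
/-- The explicit profile `E(x,t) = (T-t)[1 - ((1-e^{-√2 x})/(1+e^{-√2 x}))²]`. -/
noncomputable def vanishingSol (T x t : ℝ) : ℝ :=
  (T - t) * (1 - ((1 - Real.exp (-(Real.sqrt 2) * x)) /
    (1 + Real.exp (-(Real.sqrt 2) * x))) ^ 2)

open Real

lemma exp_deriv' (a y : ℝ) :
    HasDerivAt (fun z : ℝ => exp (-a * z)) (-a * exp (-a * y)) y := by
  simpa [Function.comp_def, mul_comm] using (Real.hasDerivAt_exp (-a * y)).comp y ((hasDerivAt_id y).const_mul (-a))

lemma hasDerivAt_r (a y : ℝ) :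
    HasDerivAt (fun z : ℝ => (1 - exp (-a * z)) / (1 + exp (-a * z)))
      (2 * a * exp (-a * y) / (1 + exp (-a * y)) ^ 2) y := by
  have hu := exp_deriv' a y
  have hpos : (0:ℝ) < 1 + exp (-a * y) := by positivity
  have h1 : HasDerivAt (fun z : ℝ => 1 - exp (-a * z)) (a * exp (-a * y)) y := by
    simpa using hu.const_sub (1:ℝ)
  have h2 : HasDerivAt (fun z : ℝ => 1 + exp (-a * z)) (-a * exp (-a * y)) y := by
    simpa using hu.const_add (1:ℝ)
  have h := h1.div h2 (ne_of_gt hpos)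
  exact h.congr_deriv (by ring)

lemma hasDerivAt_E_x (T t y : ℝ) :
    HasDerivAt (fun z => vanishingSol T z t)
      ((T - t) * (-(2 * ((1 - exp (-(Real.sqrt 2) * y)) / (1 + exp (-(Real.sqrt 2) * y))) *
        (2 * Real.sqrt 2 * exp (-(Real.sqrt 2) * y) / (1 + exp (-(Real.sqrt 2) * y)) ^ 2)))) y := by
  unfold vanishingSol
  have hr := hasDerivAt_r (Real.sqrt 2) y
  have hsq := hr.pow 2
  have h1 : HasDerivAt
      (fun z : ℝ => 1 - ((1 - exp (-(Real.sqrt 2) * z)) / (1 + exp (-(Real.sqrt 2) * z))) ^ 2)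
      (-(2 * ((1 - exp (-(Real.sqrt 2) * y)) / (1 + exp (-(Real.sqrt 2) * y))) *
        (2 * Real.sqrt 2 * exp (-(Real.sqrt 2) * y) / (1 + exp (-(Real.sqrt 2) * y)) ^ 2)))
      y := by
    have := hsq.const_sub (1:ℝ)
    exact this.congr_deriv (by ring)
  simpa using h1.const_mul (T - t)

/-- The explicit profile is a positive solution of the very fast diffusion equation with
exponent `m = 0`, `∂E/∂t = ∂/∂x (E⁻¹ ∂E/∂x)`, for `t < T`; it vanishes identically at `T`. -/
theorem vanishing_solution_very_fast_diffusion (T : ℝ) (x t : ℝ) (ht : t < T) :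
    0 < vanishingSol T x t ∧
    deriv (fun τ => vanishingSol T x τ) t =
      deriv (fun y => (vanishingSol T y t)⁻¹ * deriv (fun z => vanishingSol T z t) y) x := by
  set a := Real.sqrt 2 with ha
  have ha2 : a ^ 2 = 2 := Real.sq_sqrt (by norm_num)
  have hTt : (0:ℝ) < T - t := by linarith
  -- positivity
  have key : ∀ y : ℝ, 1 - ((1 - exp (-a * y)) / (1 + exp (-a * y))) ^ 2
      = 4 * exp (-a * y) / (1 + exp (-a * y)) ^ 2 := by
    intro y
    have hpos : (0:ℝ) < 1 + exp (-a * y) := by positivity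
    field_simp
    ring
  have hposE : ∀ y : ℝ, 0 < vanishingSol T y t := by
    intro y
    unfold vanishingSol
    rw [← ha, key y]
    have hpos : (0:ℝ) < 1 + exp (-a * y) := by positivity
    have : (0:ℝ) < exp (-a * y) := exp_pos _
    positivity
  refine ⟨hposE x, ?_⟩
  -- time derivative
  have hLHS : deriv (fun τ => vanishingSol T x τ) t
      = -(1 - ((1 - exp (-a * x)) / (1 + exp (-a * x))) ^ 2) := by
    have h : HasDerivAt (fun τ => vanishingSol T x τ)
        (-(1 - ((1 - exp (-a * x)) / (1 + exp (-a * x))) ^ 2)) t := by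
      unfold vanishingSol
      rw [← ha]
      have hb : HasDerivAt (fun τ : ℝ => T - τ) (-1) t := by
        simpa using (hasDerivAt_id t).const_sub T
      have h' := hb.mul_const (1 - ((1 - exp (-a * x)) / (1 + exp (-a * x))) ^ 2)
      exact h'.congr_deriv (by ring)
    exact h.deriv
  -- the flux function simplifies to -a * r
  have hfun : (fun y => (vanishingSol T y t)⁻¹ * deriv (fun z => vanishingSol T z t) y)
      = fun y => -a * ((1 - exp (-a * y)) / (1 + exp (-a * y))) := by
    funext y
    rw [(hasDerivAt_E_x T t y).deriv]
    have hpos : (0:ℝ) < 1 + exp (-a * y) := by positivity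
    have hu : (0:ℝ) < exp (-a * y) := exp_pos _
    unfold vanishingSol
    rw [← ha, key y]
    field_simp
    ring
  rw [hLHS, hfun]
  -- spatial derivative of -a * r
  have hr := hasDerivAt_r a x
  have h2 : HasDerivAt (fun y => -a * ((1 - exp (-a * y)) / (1 + exp (-a * y))))
      (-a * (2 * a * exp (-a * x) / (1 + exp (-a * x)) ^ 2)) x := hr.const_mul (-a)
  rw [h2.deriv, key x,
    show -a * (2 * a * exp (-a * x) / (1 + exp (-a * x)) ^ 2)
      = -(a ^ 2) * (2 * exp (-a * x) / (1 + exp (-a * x)) ^ 2) by ring, ha2]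
  ring
end

section
/- For all real numbers a > 0 and b > 0, ∫₀^∞ e^{−a²s/2 − b²/(2s)} · s^{−1/2} ds = (√(2π)/a) · e^{−ab}. -/
open MeasureTheory Set

section Aux

variable {a b : ℝ}

private lemma gauss_int : ∫ v : ℝ, Real.exp (-v ^ 2 / 2) = Real.sqrt (2 * Real.pi) := by
  have : (fun v : ℝ => Real.exp (-v ^ 2 / 2)) = fun v : ℝ => Real.exp (-(1/2) * v ^ 2) := by
    funext v; ring_nf
  rw [this, integral_gaussian]
  rw [show Real.pi / (1/2) = 2 * Real.pi by ring]

private lemma g_integrable (ha : 0 < a) (hb : 0 < b) :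
    IntegrableOn (fun t : ℝ => Real.exp (-(a * t - b / t) ^ 2 / 2)) (Ioi 0) := by
  have hmeas : AEStronglyMeasurable (fun t : ℝ => Real.exp (-(a * t - b / t) ^ 2 / 2))
      (volume.restrict (Ioi (0:ℝ))) := by
    apply ContinuousOn.aestronglyMeasurable _ measurableSet_Ioi
    apply Real.continuous_exp.comp_continuousOn
    apply ContinuousOn.div _ continuousOn_const (by norm_num)
    exact ((continuousOn_const.mul continuousOn_id).sub
      (continuousOn_const.div continuousOn_id (fun t ht => ne_of_gt ht))).pow 2 |>.neg
  have hint : Integrable (fun t : ℝ => Real.exp (a*b) * Real.exp (-(a^2/2) * t ^ 2)) := by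
    exact (integrable_exp_neg_mul_sq (by positivity)).const_mul _
  apply Integrable.mono' hint.integrableOn hmeas
  rw [ae_restrict_iff' measurableSet_Ioi]
  filter_upwards with t ht
  have ht0 : (0:ℝ) < t := ht
  rw [Real.norm_eq_abs, abs_of_pos (Real.exp_pos _), ← Real.exp_add]
  apply Real.exp_le_exp.2
  have h1 : a * t * (b / t) = a * b := by field_simp
  nlinarith [sq_nonneg (b / t), sq_nonneg (a * t - b / t)]

private lemma phi_deriv (ha : 0 < a) (hb : 0 < b) :
    ∀ t ∈ Ioi (0:ℝ), HasDerivWithinAt (fun t : ℝ => a * t - b / t) (a + b / t ^ 2) (Ioi 0) t := by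
  intro t ht
  have ht0 : t ≠ 0 := ne_of_gt ht
  have h : HasDerivAt (fun t : ℝ => a * t - b / t) (a + b / t ^ 2) t := by
    have h1 : HasDerivAt (fun t : ℝ => a * t) a t := by
      simpa using (hasDerivAt_id t).const_mul a
    have h2 : HasDerivAt (fun t : ℝ => b / t) (b * (-(t ^ 2)⁻¹)) t := by
      simpa [div_eq_mul_inv] using (hasDerivAt_inv ht0).const_mul b
    have := h1.sub h2
    exact this.congr_deriv (by ring)
  exact h.hasDerivWithinAt

private lemma phi_injOn (ha : 0 < a) (hb : 0 < b) :
    InjOn (fun t : ℝ => a * t - b / t) (Ioi 0) := by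
  have hmono : StrictMonoOn (fun t : ℝ => a * t - b / t) (Ioi 0) := by
    intro x hx y hy hxy
    have hx0 : (0:ℝ) < x := hx
    have hy0 : (0:ℝ) < y := hy
    have h1 : b / y < b / x := div_lt_div_of_pos_left hb hx0 hxy
    have h2 : a * x < a * y := by nlinarith
    simp only
    linarith
  exact hmono.injOn

private lemma phi_image (ha : 0 < a) (hb : 0 < b) :
    (fun t : ℝ => a * t - b / t) '' (Ioi 0) = univ := by
  apply eq_univ_of_forall
  intro v
  set r := Real.sqrt (v ^ 2 + 4 * a * b) with hr
  have hr2 : r ^ 2 = v ^ 2 + 4 * a * b := Real.sq_sqrt (by positivity)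
  have hrv : |v| < r := by
    have : Real.sqrt (v ^ 2) < r := by
      apply Real.sqrt_lt_sqrt (sq_nonneg v); nlinarith
    simpa [Real.sqrt_sq_eq_abs] using this
  have hvr : (0:ℝ) < v + r := by
    have := neg_le_abs v; linarith
  have ht0 : 0 < (v + r) / (2 * a) := by positivity
  refine ⟨(v + r) / (2 * a), ht0, ?_⟩
  have ha' : (2 * a) ≠ 0 := by positivity
  have hvr' : v + r ≠ 0 := ne_of_gt hvr
  field_simp
  nlinarith [hr2]

private lemma K_value (ha : 0 < a) (hb : 0 < b) :
    ∫ t in Ioi (0:ℝ), Real.exp (-(a * t - b / t) ^ 2 / 2) = Real.sqrt (2 * Real.pi) / (2 * a) := by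
  set g : ℝ → ℝ := fun t => Real.exp (-(a * t - b / t) ^ 2 / 2) with hg
  set K := ∫ t in Ioi (0:ℝ), g t with hK
  -- the reflection t ↦ b/(a t)
  have href_deriv : ∀ t ∈ Ioi (0:ℝ),
      HasDerivWithinAt (fun t : ℝ => b / (a * t)) (-(b / (a * t ^ 2))) (Ioi 0) t := by
    intro t ht
    have ht0 : t ≠ 0 := ne_of_gt ht
    have h : HasDerivAt (fun t : ℝ => b / (a * t)) (-(b / (a * t ^ 2))) t := by
      have h2 : HasDerivAt (fun t : ℝ => (b / a) * t⁻¹) ((b / a) * (-(t ^ 2)⁻¹)) t :=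
        (hasDerivAt_inv ht0).const_mul _
      have heq : (fun t : ℝ => (b / a) * t⁻¹) = fun t : ℝ => b / (a * t) := by
        funext x; field_simp
      rw [heq] at h2
      convert h2 using 1
      field_simp
    exact h.hasDerivWithinAt
  have href_inj : InjOn (fun t : ℝ => b / (a * t)) (Ioi 0) := by
    intro x hx y hy h
    have hx0 : (x:ℝ) ≠ 0 := ne_of_gt hx
    have hy0 : (y:ℝ) ≠ 0 := ne_of_gt hy
    simp only at h
    rw [div_eq_div_iff (by positivity) (by positivity)] at h
    have h2 : (b * a) * x = (b * a) * y := by linarith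
    exact mul_left_cancel₀ (by positivity) h2
  have href_img : (fun t : ℝ => b / (a * t)) '' (Ioi 0) = Ioi 0 := by
    apply Subset.antisymm
    · rintro _ ⟨t, ht, rfl⟩
      have ht0 : (0:ℝ) < t := ht
      exact mem_Ioi.2 (by positivity)
    · intro y hy
      have hy0 : (0:ℝ) < y := hy
      refine ⟨b / (a * y), mem_Ioi.2 (by positivity), ?_⟩
      field_simp
  -- pointwise identity for the reflection substitution
  have hpt : ∀ t ∈ Ioi (0:ℝ),
      (fun x : ℝ => |(-(b / (a * x ^ 2)))| • g (b / (a * x))) t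
        = (fun x : ℝ => (b / (a * x ^ 2)) * g x) t := by
    intro t ht
    have ht0 : (0:ℝ) < t := ht
    have ht0' : t ≠ 0 := ne_of_gt ht0
    have habs : |(-(b / (a * t ^ 2)))| = b / (a * t ^ 2) := by
      rw [abs_neg, abs_of_pos (by positivity)]
    simp only [smul_eq_mul, habs]
    congr 1
    simp only [hg]
    congr 1
    have h1 : a * (b / (a * t)) = b / t := by field_simp
    have h2 : b / (b / (a * t)) = a * t := by
      rw [div_div_eq_mul_div]
      field_simp
    rw [h1, h2]
    ring
  -- B1 : ∫ (b/(a t²)) g t = K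
  have hB1 : ∫ t in Ioi (0:ℝ), (b / (a * t ^ 2)) * g t = K := by
    have := integral_image_eq_integral_abs_deriv_smul measurableSet_Ioi href_deriv href_inj g
    rw [href_img] at this
    rw [hK, this]
    exact (setIntegral_congr_fun measurableSet_Ioi hpt).symm
  have hint_g := g_integrable ha hb
  have hint_b : IntegrableOn (fun t : ℝ => (b / (a * t ^ 2)) * g t) (Ioi 0) := by
    have h := (integrableOn_image_iff_integrableOn_abs_deriv_smul measurableSet_Ioi
      href_deriv href_inj g)
    rw [href_img] at h
    exact (h.1 hint_g).congr_fun hpt measurableSet_Ioi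
  -- B2 : ∫ (a + b/t²) g t = √(2π)
  have hB2 : ∫ t in Ioi (0:ℝ), (a + b / t ^ 2) * g t = Real.sqrt (2 * Real.pi) := by
    have h := integral_image_eq_integral_abs_deriv_smul measurableSet_Ioi (phi_deriv ha hb)
      (phi_injOn ha hb) (fun v : ℝ => Real.exp (-v ^ 2 / 2))
    rw [phi_image ha hb, setIntegral_univ, gauss_int] at h
    rw [h]
    symm
    apply setIntegral_congr_fun measurableSet_Ioi
    intro t ht
    have ht0 : (0:ℝ) < t := ht
    have habs : |a + b / t ^ 2| = a + b / t ^ 2 := abs_of_pos (by positivity)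
    simp only [smul_eq_mul, habs, hg]
  -- split B2
  have hsplit : ∫ t in Ioi (0:ℝ), (a + b / t ^ 2) * g t
      = a * K + a * ∫ t in Ioi (0:ℝ), (b / (a * t ^ 2)) * g t := by
    have heq : ∀ t ∈ Ioi (0:ℝ), (fun x : ℝ => (a + b / x ^ 2) * g x) t
        = (fun x : ℝ => a * g x + a * ((b / (a * x ^ 2)) * g x)) t := by
      intro t ht
      have ht0 : t ≠ 0 := ne_of_gt (show (0:ℝ) < t from ht)
      simp only
      field_simp
    rw [setIntegral_congr_fun measurableSet_Ioi heq,
      integral_add (hint_g.const_mul a) (hint_b.const_mul a),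
      integral_const_mul, integral_const_mul, hK]
  rw [hB1] at hsplit
  rw [hsplit] at hB2
  have h2a : (2 * a) ≠ 0 := by positivity
  field_simp at hB2 ⊢
  linarith

end Aux

/-- The Schwinger-parameter Gaussian integral:
`∫₀^∞ e^{-a²s/2 - b²/(2s)} s^{-1/2} ds = (√(2π)/a) e^{-ab}` for `a, b > 0`. -/
theorem schwinger_gaussian_integral (a b : ℝ) (ha : 0 < a) (hb : 0 < b) :
    ∫ s in Ioi (0 : ℝ), Real.exp (-(a ^ 2 * s) / 2 - b ^ 2 / (2 * s)) * s ^ (-(1 : ℝ) / 2) =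
      Real.sqrt (2 * Real.pi) / a * Real.exp (-(a * b)) := by
  have key := K_value ha hb
  have hsub := integral_comp_rpow_Ioi
    (fun s : ℝ => Real.exp (-(a ^ 2 * s) / 2 - b ^ 2 / (2 * s)) * s ^ (-(1 : ℝ) / 2))
    (p := 2) two_ne_zero
  rw [← hsub]
  have hcong : ∀ x ∈ Ioi (0:ℝ),
      (fun x : ℝ => (|(2:ℝ)| * x ^ ((2:ℝ) - 1)) •
        ((fun s : ℝ => Real.exp (-(a ^ 2 * s) / 2 - b ^ 2 / (2 * s)) * s ^ (-(1 : ℝ) / 2))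
          (x ^ (2:ℝ)))) x
      = (fun x : ℝ => (2 * Real.exp (-(a * b))) * Real.exp (-(a * x - b / x) ^ 2 / 2)) x := by
    intro x hx
    have hx0 : (0:ℝ) < x := hx
    have hx0' : x ≠ 0 := ne_of_gt hx0
    have hx2 : x ^ (2:ℝ) = x ^ 2 := by
      rw [← Real.rpow_natCast x 2]; norm_num
    have hxp1 : x ^ ((2:ℝ) - 1) = x := by
      norm_num
    have hxhalf : (x ^ 2 : ℝ) ^ (-(1:ℝ) / 2) = x⁻¹ := by
      rw [← Real.rpow_natCast x 2, ← Real.rpow_mul hx0.le]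
      norm_num
      exact Real.rpow_neg_one x
    have hexp : -(a ^ 2 * x ^ 2) / 2 - b ^ 2 / (2 * x ^ 2)
        = -(a * x - b / x) ^ 2 / 2 + -(a * b) := by
      field_simp
      ring
    simp only [hx2, hxp1, hxhalf, hexp, Real.exp_add, smul_eq_mul]
    rw [abs_of_pos (by norm_num : (0:ℝ) < 2)]
    field_simp
  rw [setIntegral_congr_fun measurableSet_Ioi hcong, integral_const_mul, key]
  rw [eq_comm]
  field_simp
end
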